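/- The set S of irrational t ∈ (0,1) whose regular continued fraction partial quotients satisfy e_{i+1}(t) ≥ φ^{d_i(t)} for infinitely many i (where φ = (1+√5)/2 and d_i(t) is the i-th convergent denominator) is uncountable. -/

import Mathlib

/-- One step of the Gauss map underlying the regular continued fraction. -/
noncomputable def gaussMap (x : ℝ) : ℝ := Int.fract (1 / x)

/-- The m-th partial quotient `e_m(t)` of the regular continued fraction
expansion of `t ∈ (0,1)` (for `m ≥ 1`). -/
noncomputable def partialQuotient (t : ℝ) (m : ℕ) : ℤ :=
  ⌊1 / (gaussMap^[m - 1] t)⌋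

/-- Numerators `c_n` of the convergents of the regular continued fraction of `t`. -/
noncomputable def convNum (t : ℝ) : ℕ → ℤ
  | 0 => 0
  | 1 => 1
  | (n + 2) => partialQuotient t (n + 2) * convNum t (n + 1) + convNum t n

/-- Denominators `d_n` of the convergents of the regular continued fraction of `t`. -/
noncomputable def convDen (t : ℝ) : ℕ → ℤ
  | 0 => 1
  | 1 => partialQuotient t 1
  | (n + 2) => partialQuotient t (n + 2) * convDen t (n + 1) + convDen t n


/-!
For any digits `a i ≥ 1`, the images of `[0,1]` under the maps
`x ↦ 1 / (a 0 + 1 / (a 1 + ⋯ + 1 / (a (n-1) + x)))` (compositions of inverse branches of the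
Gauss map) are nested compact sets; a point of their intersection has its whole Gauss orbit in
`(0,1)`, hence is irrational (a rational orbit runs through the Euclidean algorithm and reaches
`0`), and its partial quotients are exactly `a`. The digits are then chosen recursively as
`a n = 2 ^ (d n + 1) + [n ∈ s]`, where the convergent denominator `d n` only depends on
`a 0, …, a (n-1)`: then `a n ≥ 2 ^ d n ≥ φ ^ d n` for every `n`, and the parity of `a n` recovers
`s`, so `s ↦ t` embeds the uncountable `Set ℕ` into the set of the theorem.
-/

open Set

noncomputable def invBranch (k : ℕ) (x : ℝ) : ℝ := 1 / (k + x)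

noncomputable def invBranchComp : (ℕ → ℕ) → ℕ → ℝ → ℝ
  | _, 0 => id
  | a, n + 1 => invBranch (a 0) ∘ invBranchComp (fun i => a (i + 1)) n

noncomputable def withDigits (a : ℕ → ℕ) : Set ℝ := ⋂ n, invBranchComp a n '' Icc 0 1

section invBranch

variable {k : ℕ} {x : ℝ}

lemma invBranch_injective (k : ℕ) : Function.Injective (invBranch k) := by
  intro x y h
  simpa [invBranch] using h

lemma invBranch_pos (hk : 1 ≤ k) (hx : 0 ≤ x) : 0 < invBranch k x := by
  have : (1 : ℝ) ≤ k := by exact_mod_cast hk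
  unfold invBranch
  positivity

lemma invBranch_le_one (hk : 1 ≤ k) (hx : 0 ≤ x) : invBranch k x ≤ 1 := by
  have : (1 : ℝ) ≤ k := by exact_mod_cast hk
  rw [invBranch, div_le_one (by positivity)]
  linarith

lemma invBranch_lt_one (hk : 1 ≤ k) (hx : 0 < x) : invBranch k x < 1 := by
  have : (1 : ℝ) ≤ k := by exact_mod_cast hk
  rw [invBranch, div_lt_one (by positivity)]
  linarith

lemma mapsTo_invBranch (hk : 1 ≤ k) : MapsTo (invBranch k) (Icc 0 1) (Icc 0 1) :=
  fun _ hx => ⟨(invBranch_pos hk hx.1).le, invBranch_le_one hk hx.1⟩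

lemma continuousOn_invBranch (hk : 1 ≤ k) : ContinuousOn (invBranch k) (Icc 0 1) := by
  refine continuousOn_const.div (by fun_prop) fun x hx => ?_
  have : (1 : ℝ) ≤ k := by exact_mod_cast hk
  have := hx.1
  positivity

lemma one_div_invBranch : 1 / invBranch k x = k + x := one_div_one_div _

lemma floor_one_div_invBranch (hx : x ∈ Ico 0 1) : ⌊1 / invBranch k x⌋ = k := by
  rw [one_div_invBranch, Int.floor_eq_iff]
  push_cast
  constructor <;> linarith [hx.1, hx.2]

lemma gaussMap_invBranch (hx : x ∈ Ico 0 1) : gaussMap (invBranch k x) = x := by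
  rw [gaussMap, one_div_invBranch, Int.fract_natCast_add, Int.fract_eq_self.2 hx]

end invBranch

section withDigits

variable {a : ℕ → ℕ} {t : ℝ}

lemma mapsTo_invBranchComp (ha : ∀ i, 1 ≤ a i) (n : ℕ) :
    MapsTo (invBranchComp a n) (Icc 0 1) (Icc 0 1) := by
  induction n generalizing a with
  | zero => exact mapsTo_id _
  | succ n ih => exact (mapsTo_invBranch (ha 0)).comp (ih fun i => ha (i + 1))

lemma continuousOn_invBranchComp (ha : ∀ i, 1 ≤ a i) (n : ℕ) :
    ContinuousOn (invBranchComp a n) (Icc 0 1) := by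
  induction n generalizing a with
  | zero => exact continuousOn_id
  | succ n ih =>
    exact (continuousOn_invBranch (ha 0)).comp (ih fun i => ha (i + 1))
      (mapsTo_invBranchComp (fun i => ha (i + 1)) n)

lemma invBranchComp_succ_image_subset (ha : ∀ i, 1 ≤ a i) (n : ℕ) :
    invBranchComp a (n + 1) '' Icc 0 1 ⊆ invBranchComp a n '' Icc 0 1 := by
  induction n generalizing a with
  | zero => simpa [invBranchComp] using (mapsTo_invBranch (ha 0)).image_subset
  | succ n ih =>
    exact (image_comp _ _ _).trans_subset
      ((image_mono (ih fun i => ha (i + 1))).trans_eq (image_comp _ _ _).symm)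

lemma withDigits_nonempty (ha : ∀ i, 1 ≤ a i) : (withDigits a).Nonempty :=
  IsCompact.nonempty_iInter_of_sequence_nonempty_isCompact_isClosed _
    (invBranchComp_succ_image_subset ha)
    (fun _ => (nonempty_Icc.2 zero_le_one).image _)
    (isCompact_Icc.image_of_continuousOn (continuousOn_invBranchComp ha 0))
    (fun n => (isCompact_Icc.image_of_continuousOn (continuousOn_invBranchComp ha n)).isClosed)

lemma withDigits_subset_Icc : withDigits a ⊆ Icc 0 1 :=
  (iInter_subset _ 0).trans_eq (by simp [invBranchComp])

lemma withDigits_subset_image :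
    withDigits a ⊆ invBranch (a 0) '' withDigits (fun i => a (i + 1)) := by
  rw [withDigits, withDigits, (invBranch_injective _).injOn.image_iInter_eq]
  refine subset_iInter fun n => (iInter_subset _ (n + 1)).trans ?_
  rw [invBranchComp, image_comp]

lemma withDigits_subset_Ioc (ha : ∀ i, 1 ≤ a i) : withDigits a ⊆ Ioc 0 1 := by
  rintro _ ht
  obtain ⟨x, hx, rfl⟩ := withDigits_subset_image ht
  have hx := withDigits_subset_Icc hx
  exact ⟨invBranch_pos (ha 0) hx.1, invBranch_le_one (ha 0) hx.1⟩

lemma withDigits_subset_Ioo (ha : ∀ i, 1 ≤ a i) : withDigits a ⊆ Ioo 0 1 := by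
  rintro _ ht
  obtain ⟨x, hx, rfl⟩ := withDigits_subset_image ht
  have hx := withDigits_subset_Ioc (fun i => ha (i + 1)) hx
  exact ⟨invBranch_pos (ha 0) hx.1.le, invBranch_lt_one (ha 0) hx.1⟩

lemma floor_one_div_and_gaussMap_mem_of_mem_withDigits (ha : ∀ i, 1 ≤ a i)
    (ht : t ∈ withDigits a) :
    ⌊1 / t⌋ = a 0 ∧ gaussMap t ∈ withDigits (fun i => a (i + 1)) := by
  obtain ⟨x, hx, rfl⟩ := withDigits_subset_image ht
  have hx' := Ioo_subset_Ico_self (withDigits_subset_Ioo (fun i => ha (i + 1)) hx)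
  exact ⟨floor_one_div_invBranch hx', (gaussMap_invBranch hx').symm ▸ hx⟩

lemma iterate_gaussMap_mem_withDigits (ha : ∀ i, 1 ≤ a i) (ht : t ∈ withDigits a) (m : ℕ) :
    gaussMap^[m] t ∈ withDigits (fun i => a (i + m)) := by
  induction m with
  | zero => exact ht
  | succ m ih =>
    rw [Function.iterate_succ_apply']
    simpa only [add_assoc, add_comm 1 m] using
      (floor_one_div_and_gaussMap_mem_of_mem_withDigits (fun i => ha (i + m)) ih).2

lemma partialQuotient_of_mem_withDigits (ha : ∀ i, 1 ≤ a i) (ht : t ∈ withDigits a)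
    (m : ℕ) : partialQuotient t (m + 1) = a m := by
  simpa [partialQuotient] using (floor_one_div_and_gaussMap_mem_of_mem_withDigits
    (fun i => ha (i + m)) (iterate_gaussMap_mem_withDigits ha ht m)).1

end withDigits

lemma exists_iterate_gaussMap_div_notMem_Ioo (p q : ℕ) :
    ∃ n, gaussMap^[n] ((p : ℝ) / q) ∉ Ioo 0 1 := by
  induction p using Nat.strong_induction_on generalizing q with
  | _ p ih =>
    rcases Nat.eq_zero_or_pos p with rfl | hp
    · exact ⟨0, by simp⟩
    -- one step of the Euclidean algorithm: `p / q ↦ (q % p) / p`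
    have hstep : gaussMap ((p : ℝ) / q) = ((q % p : ℕ) : ℝ) / p := by
      rw [gaussMap, one_div_div, Int.fract_div_natCast_eq_div_natCast_mod]
    obtain ⟨n, hn⟩ := ih (q % p) (Nat.mod_lt q hp) p
    exact ⟨n + 1, by rwa [Function.iterate_succ_apply, hstep]⟩

lemma irrational_of_forall_iterate_gaussMap_mem_Ioo {t : ℝ}
    (h : ∀ n, gaussMap^[n] t ∈ Ioo 0 1) : Irrational t := by
  rintro ⟨x, rfl⟩
  have hx : 0 < x := Rat.cast_pos.1 (h 0).1
  have hcast : (x : ℝ) = (x.num.natAbs : ℝ) / x.den := by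
    rw [Rat.cast_def, Nat.cast_natAbs, abs_of_pos (Rat.num_pos.2 hx)]
  obtain ⟨n, hn⟩ := exists_iterate_gaussMap_div_notMem_Ioo x.num.natAbs x.den
  exact hn (hcast ▸ h n)

lemma irrational_of_mem_withDigits {a : ℕ → ℕ} {t : ℝ} (ha : ∀ i, 1 ≤ a i)
    (ht : t ∈ withDigits a) : Irrational t :=
  irrational_of_forall_iterate_gaussMap_mem_Ioo fun n =>
    withDigits_subset_Ioo (fun i => ha (i + n)) (iterate_gaussMap_mem_withDigits ha ht n)

-- `markedDen s n` is the convergent denominator `d n` of the digit sequence `markedDigit s`.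
open Classical in
noncomputable def markedDen (s : Set ℕ) : ℕ → ℕ
  | 0 => 1
  | 1 => 2 ^ (1 + 1) + if 0 ∈ s then 1 else 0
  | n + 2 => (2 ^ (markedDen s (n + 1) + 1) + if n + 1 ∈ s then 1 else 0) *
      markedDen s (n + 1) + markedDen s n

open Classical in
noncomputable def markedDigit (s : Set ℕ) (n : ℕ) : ℕ :=
  2 ^ (markedDen s n + 1) + if n ∈ s then 1 else 0

lemma one_le_markedDigit (s : Set ℕ) (n : ℕ) : 1 ≤ markedDigit s n :=
  Nat.one_le_two_pow.trans (Nat.le_add_right _ _)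

lemma markedDigit_mod_two_eq_one_iff (s : Set ℕ) (n : ℕ) :
    markedDigit s n % 2 = 1 ↔ n ∈ s := by
  rw [markedDigit, pow_succ', Nat.mul_add_mod]
  split_ifs <;> simp [*]

lemma eq_of_markedDigit_eq {s s' : Set ℕ} (h : ∀ n, markedDigit s n = markedDigit s' n) :
    s = s' := by
  ext n
  rw [← markedDigit_mod_two_eq_one_iff, h, markedDigit_mod_two_eq_one_iff]

lemma convDen_eq_markedDen {s : Set ℕ} {t : ℝ} (ht : t ∈ withDigits (markedDigit s)) :
    ∀ n, convDen t n = markedDen s n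
  | 0 => rfl
  | 1 => by
    rw [convDen, partialQuotient_of_mem_withDigits (one_le_markedDigit s) ht 0]
    rfl
  | n + 2 => by
    rw [convDen, partialQuotient_of_mem_withDigits (one_le_markedDigit s) ht (n + 1),
      convDen_eq_markedDen ht (n + 1), convDen_eq_markedDen ht n]
    simp [markedDen, markedDigit]

lemma goldenRatio_pow_le_markedDigit (s : Set ℕ) (n : ℕ) :
    Real.goldenRatio ^ markedDen s n ≤ markedDigit s n := by
  calc Real.goldenRatio ^ markedDen s n ≤ 2 ^ markedDen s n :=
        pow_le_pow_left₀ Real.goldenRatio_pos.le Real.goldenRatio_lt_two.le _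
    _ ≤ 2 ^ (markedDen s n + 1) := pow_le_pow_right₀ one_le_two (Nat.le_succ _)
    _ ≤ markedDigit s n := by
      rw [markedDigit]
      push_cast
      exact le_add_of_nonneg_right (by positivity)

lemma goldenRatio_rpow_convDen_le_partialQuotient {s : Set ℕ} {t : ℝ}
    (ht : t ∈ withDigits (markedDigit s)) (i : ℕ) :
    ((1 + Real.sqrt 5) / 2) ^ (convDen t i : ℝ) ≤ (partialQuotient t (i + 1) : ℝ) := by
  rw [convDen_eq_markedDen ht, partialQuotient_of_mem_withDigits (one_le_markedDigit s) ht,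
    Int.cast_natCast, Int.cast_natCast, Real.rpow_natCast]
  exact goldenRatio_pow_le_markedDigit s i

lemma not_countable_set_nat : ¬ Countable (Set ℕ) := fun _ =>
  let ⟨f, hf⟩ := exists_injective_nat (Set ℕ)
  Function.cantor_injective f hf

theorem stmt_18 :
    ¬ Set.Countable
        {t : ℝ | t ∈ Set.Ioo (0 : ℝ) 1 ∧ Irrational t ∧
          {i : ℕ | ((1 + Real.sqrt 5) / 2) ^ (convDen t i : ℝ) ≤
              (partialQuotient t (i + 1) : ℝ)}.Infinite} := by
  intro hS
  choose t ht using fun s => withDigits_nonempty (one_le_markedDigit s)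
  have hpq s := partialQuotient_of_mem_withDigits (one_le_markedDigit s) (ht s)
  refine not_countable_set_nat (countable_univ_iff.1
    (MapsTo.countable_of_injOn (f := t) (fun s _ => ?_) (fun s _ s' _ h => ?_) hS))
  · exact ⟨withDigits_subset_Ioo (one_le_markedDigit s) (ht s),
      irrational_of_mem_withDigits (one_le_markedDigit s) (ht s),
      infinite_univ.mono fun i _ => goldenRatio_rpow_convDen_le_partialQuotient (ht s) i⟩
  · exact eq_of_markedDigit_eq fun n => by exact_mod_cast (hpq s n).symm.trans (h ▸ hpq s' n)
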